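/- Let Ω ⊆ ℝ² be measurable, r_c > 0, F₀ > 0, and define g(t,x) = F₀·𝟙_{B_{r_c}(0)}(x − z(t)) for x ∈ Ω, where z : [0,T] → ℝ² is Hölder continuous with exponent 1/2 and Hölder seminorm at most M. Then for any p ≥ 1, the map t ↦ g(t,·) from [0,T] to L^p(Ω) is Hölder continuous with exponent 1/(2p), with Hölder constant F₀ (4 r_c M)^{1/p}. -/

import Mathlib

/-!
Pointwise, `|g t₁ - g t₂|` is `F₀` times the indicator of the symmetric difference of the
discs of radius `rc` centred at `z t₁` and `z t₂`, so its `L^p` norm is `F₀` times the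
`1/p`-th power of the area of that symmetric difference. Each of the two lunes has area at
most `2 rc d`, where `d = |z t₁ - z t₂|`: after a rigid motion the centres are `0` and
`(0, d)`, and every vertical slice of the lune is an interval of length at most `d` over a
base of length `2 rc`. The Hölder bound `d ≤ M |t₁ - t₂|^{1/2}` then finishes the estimate.
-/

open MeasureTheory Metric
open scoped symmDiff

theorem setOf_sq_lt_sdiff_subset_Ioc (c : ℝ) {d : ℝ} (hd : 0 ≤ d) :
    {y : ℝ | y ^ 2 < c} \ {y | (y - d) ^ 2 < c} ⊆ Set.Ioc (-√c) (d - √c) := by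
  rintro y ⟨hy, hyd⟩
  simp only [Set.mem_ofPred_eq, not_lt] at hy hyd
  have hs : √c ^ 2 = c := Real.sq_sqrt (by nlinarith)
  have hs0 : 0 ≤ √c := Real.sqrt_nonneg c
  have hlt : -√c < y ∧ y < √c := abs_lt_of_sq_lt_sq' (hs.symm ▸ hy) hs0
  refine ⟨hlt.1, ?_⟩
  nlinarith

theorem volume_disk_sdiff_shifted_disk_le {r : ℝ} (hr : 0 ≤ r) {d : ℝ} (hd : 0 ≤ d) :
    volume ({p : ℝ × ℝ | p.1 ^ 2 + p.2 ^ 2 < r ^ 2} \ {p | p.1 ^ 2 + (p.2 - d) ^ 2 < r ^ 2})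
      ≤ ENNReal.ofReal (2 * r * d) := by
  set L := {p : ℝ × ℝ | p.1 ^ 2 + p.2 ^ 2 < r ^ 2} \ {p | p.1 ^ 2 + (p.2 - d) ^ 2 < r ^ 2}
  have hmeas : MeasurableSet L :=
    (measurableSet_lt (by fun_prop) measurable_const).diff
      (measurableSet_lt (by fun_prop) measurable_const)
  have hfiber (x : ℝ) : Prod.mk x ⁻¹' L =
      {y : ℝ | y ^ 2 < r ^ 2 - x ^ 2} \ {y | (y - d) ^ 2 < r ^ 2 - x ^ 2} := by
    ext y
    simp only [L, Set.mem_preimage, Set.mem_sdiff, Set.mem_ofPred_eq]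
    constructor <;> rintro ⟨h1, h2⟩ <;> constructor <;> linarith
  have hfiber_le (x : ℝ) :
      volume (Prod.mk x ⁻¹' L) ≤ (Set.Ioo (-r) r).indicator (fun _ => ENNReal.ofReal d) x := by
    rw [hfiber]
    by_cases hx : x ∈ Set.Ioo (-r) r
    · rw [Set.indicator_of_mem hx]
      calc _ ≤ volume (Set.Ioc (-√(r ^ 2 - x ^ 2)) (d - √(r ^ 2 - x ^ 2))) :=
            measure_mono (setOf_sq_lt_sdiff_subset_Ioc _ hd)
        _ = ENNReal.ofReal d := by rw [Real.volume_Ioc]; ring_nf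
    · have hempty : {y : ℝ | y ^ 2 < r ^ 2 - x ^ 2} = ∅ := by
        refine Set.eq_empty_of_forall_notMem fun y (hy : y ^ 2 < r ^ 2 - x ^ 2) => hx ?_
        exact abs_lt.mp (abs_lt_of_sq_lt_sq (by nlinarith [sq_nonneg y]) hr)
      simp [hempty]
  rw [Measure.volume_eq_prod, Measure.prod_apply hmeas]
  calc _ ≤ ∫⁻ x, (Set.Ioo (-r) r).indicator (fun _ => ENNReal.ofReal d) x :=
        lintegral_mono hfiber_le
    _ = ENNReal.ofReal (2 * r * d) := by
      rw [lintegral_indicator_const measurableSet_Ioo, Real.volume_Ioo, ← ENNReal.ofReal_mul hd]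
      ring_nf

theorem measure_ball_sdiff_ball_eq_sub {E : Type*} [NormedAddCommGroup E] [MeasurableSpace E]
    [BorelSpace E] (μ : Measure E) [μ.IsAddRightInvariant] (a b : E) (r : ℝ) :
    μ (ball a r \ ball b r) = μ (ball 0 r \ ball (b - a) r) := by
  have h : ball a r \ ball b r = (· - a) ⁻¹' (ball 0 r \ ball (b - a) r) := by
    ext x
    simp [dist_eq_norm, sub_sub_sub_cancel_right]
  rw [h]
  exact (measurePreserving_sub_right μ a).measure_preimage
    (measurableSet_ball.diff measurableSet_ball).nullMeasurableSet

theorem volume_ball_sdiff_ball_eq_of_dist_eq {E : Type*} [NormedAddCommGroup E]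
    [InnerProductSpace ℝ E] [FiniteDimensional ℝ E] [MeasurableSpace E] [BorelSpace E]
    {a b a' b' : E} (h : dist a b = dist a' b') (r : ℝ) :
    volume (ball a r \ ball b r) = volume (ball a' r \ ball b' r) := by
  rw [measure_ball_sdiff_ball_eq_sub, measure_ball_sdiff_ball_eq_sub volume a']
  have hnorm : ‖b - a‖ = ‖b' - a'‖ := by
    rw [← dist_eq_norm, ← dist_eq_norm, dist_comm, h, dist_comm]
  -- a reflection across the perpendicular bisector of `b - a` and `b' - a'` maps one onto the other
  set f := (Submodule.span ℝ {(b - a) - (b' - a')})ᗮ.reflection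
  have hf : f (b - a) = b' - a' := Submodule.reflection_sub hnorm
  have hpre : ball 0 r \ ball (b - a) r = f ⁻¹' (ball 0 r \ ball (b' - a') r) := by
    rw [Set.preimage_sdiff, f.preimage_ball, f.preimage_ball, map_zero, ← hf, f.symm_apply_apply]
  rw [hpre]
  exact f.measurePreserving.measure_preimage
    (measurableSet_ball.diff measurableSet_ball).nullMeasurableSet

noncomputable def euclideanPlaneEquivProd : EuclideanSpace ℝ (Fin 2) ≃ᵐ ℝ × ℝ :=
  (MeasurableEquiv.toLp 2 (Fin 2 → ℝ)).symm.trans MeasurableEquiv.finTwoArrow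

theorem measurePreserving_euclideanPlaneEquivProd :
    MeasurePreserving euclideanPlaneEquivProd volume volume :=
  (volume_preserving_finTwoArrow ℝ).comp
    (EuclideanSpace.volume_preserving_symm_measurableEquiv_toLp (Fin 2))

theorem ball_eq_preimage_euclideanPlaneEquivProd (c : EuclideanSpace ℝ (Fin 2)) {r : ℝ}
    (hr : 0 < r) : ball c r = euclideanPlaneEquivProd ⁻¹'
      {p : ℝ × ℝ | (p.1 - c 0) ^ 2 + (p.2 - c 1) ^ 2 < r ^ 2} := by
  ext x
  have hx : euclideanPlaneEquivProd x = (x 0, x 1) := rfl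
  simp [EuclideanSpace.dist_eq, Fin.sum_univ_two, hx, Real.sqrt_lt' hr, Real.dist_eq, sq_abs]

theorem volume_ball_sdiff_ball_le (a b : EuclideanSpace ℝ (Fin 2)) {r : ℝ} (hr : 0 < r) :
    volume (ball a r \ ball b r) ≤ ENNReal.ofReal (2 * r * dist a b) := by
  let w : EuclideanSpace ℝ (Fin 2) := !₂[0, dist a b]
  have hw : dist 0 w = dist a b := by simp [w, EuclideanSpace.dist_eq, Fin.sum_univ_two]
  rw [volume_ball_sdiff_ball_eq_of_dist_eq hw.symm, ball_eq_preimage_euclideanPlaneEquivProd 0 hr,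
    ball_eq_preimage_euclideanPlaneEquivProd w hr, ← Set.preimage_sdiff,
    measurePreserving_euclideanPlaneEquivProd.measure_preimage
      ((measurableSet_lt (by fun_prop) measurable_const).diff
        (measurableSet_lt (by fun_prop) measurable_const)).nullMeasurableSet]
  simpa [w] using volume_disk_sdiff_shifted_disk_le hr.le dist_nonneg

theorem volume_ball_symmDiff_ball_le (a b : EuclideanSpace ℝ (Fin 2)) {r : ℝ} (hr : 0 < r) :
    volume (ball a r ∆ ball b r) ≤ ENNReal.ofReal (4 * r * dist a b) :=
  calc volume (ball a r ∆ ball b r)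
      ≤ volume (ball a r \ ball b r) + volume (ball b r \ ball a r) := measure_union_le _ _
    _ ≤ ENNReal.ofReal (2 * r * dist a b) + ENNReal.ofReal (2 * r * dist b a) :=
      add_le_add (volume_ball_sdiff_ball_le a b hr) (volume_ball_sdiff_ball_le b a hr)
    _ = ENNReal.ofReal (4 * r * dist a b) := by
      rw [dist_comm b a, ← ENNReal.ofReal_add (by positivity) (by positivity)]
      ring_nf

theorem eLpNorm_indicator_const_sub_indicator_const {α E : Type*} [MeasurableSpace α]
    [NormedAddCommGroup E] {μ : Measure α} {s t : Set α} (hs : MeasurableSet s)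
    (ht : MeasurableSet t) (c : E) {p : ENNReal} (hp : p ≠ 0) (hp_top : p ≠ ⊤) :
    eLpNorm (s.indicator (fun _ => c) - t.indicator (fun _ => c)) p μ
      = ‖c‖ₑ * μ (s ∆ t) ^ (1 / p.toReal) := by
  rw [← eLpNorm_indicator_const (hs.symmDiff ht) hp hp_top]
  exact eLpNorm_congr_norm_ae (.of_forall fun x =>
    (Set.apply_indicator_symmDiff norm_neg s t _ x).symm)

theorem mul_indicator_ball_zero_sub {E : Type*} [SeminormedAddCommGroup E] (a r : ℝ) (c x : E) :
    a * (ball (0 : E) r).indicator (fun _ => (1 : ℝ)) (x - c)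
      = (ball c r).indicator (fun _ => a) x := by
  have hmem : x - c ∈ ball 0 r ↔ x ∈ ball c r := by rw [mem_ball_zero_iff, mem_ball_iff_norm]
  by_cases hx : x ∈ ball c r
  · simp [hx, hmem.mpr hx]
  · simp [hx, mt hmem.mp hx]

theorem stmt_3_general (Ω : Set (EuclideanSpace ℝ (Fin 2)))
    (rc F₀ T M : ℝ) (hrc : 0 < rc) (hF₀ : 0 < F₀) (hM : 0 ≤ M)
    (z : ℝ → EuclideanSpace ℝ (Fin 2))
    (hz : ∀ t₁ ∈ Set.Icc (0 : ℝ) T, ∀ t₂ ∈ Set.Icc (0 : ℝ) T,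
      dist (z t₁) (z t₂) ≤ M * |t₁ - t₂| ^ ((1 : ℝ) / 2))
    (g : ℝ → EuclideanSpace ℝ (Fin 2) → ℝ)
    (hg : ∀ t x, g t x = F₀ * (Metric.ball (0 : EuclideanSpace ℝ (Fin 2)) rc).indicator
      (fun _ => (1 : ℝ)) (x - z t))
    (p : ℝ) (hp : 1 ≤ p) :
    ∀ t₁ ∈ Set.Icc (0 : ℝ) T, ∀ t₂ ∈ Set.Icc (0 : ℝ) T,
      eLpNorm (fun x => g t₁ x - g t₂ x) (ENNReal.ofReal p) (volume.restrict Ω)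
        ≤ ENNReal.ofReal (F₀ * (4 * rc * M) ^ (1 / p) * |t₁ - t₂| ^ (1 / (2 * p))) := by
  intro t₁ ht₁ t₂ ht₂
  have hp0 : 0 < p := zero_lt_one.trans_le hp
  have hg_ball (t : ℝ) : g t = (ball (z t) rc).indicator fun _ => F₀ := by
    ext x
    rw [hg, mul_indicator_ball_zero_sub]
  have hΔ : 0 ≤ |t₁ - t₂| ^ ((1 : ℝ) / 2) := by positivity
  have hvol : volume.restrict Ω (ball (z t₁) rc ∆ ball (z t₂) rc)
      ≤ ENNReal.ofReal (4 * rc * M * |t₁ - t₂| ^ ((1 : ℝ) / 2)) :=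
    (Measure.restrict_apply_le _ _).trans <| (volume_ball_symmDiff_ball_le _ _ hrc).trans <|
      ENNReal.ofReal_le_ofReal <| by nlinarith [hz t₁ ht₁ t₂ ht₂]
  have hexp : (4 * rc * M * |t₁ - t₂| ^ ((1 : ℝ) / 2)) ^ (1 / p)
      = (4 * rc * M) ^ (1 / p) * |t₁ - t₂| ^ (1 / (2 * p)) := by
    rw [Real.mul_rpow (by positivity) hΔ, ← Real.rpow_mul (abs_nonneg _)]
    ring_nf
  rw [show (fun x => g t₁ x - g t₂ x) = g t₁ - g t₂ from rfl, hg_ball, hg_ball,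
    eLpNorm_indicator_const_sub_indicator_const measurableSet_ball measurableSet_ball _
      (by simpa using hp0) ENNReal.ofReal_ne_top, ENNReal.toReal_ofReal hp0.le]
  calc ‖F₀‖ₑ * (volume.restrict Ω (ball (z t₁) rc ∆ ball (z t₂) rc)) ^ (1 / p)
      ≤ ENNReal.ofReal F₀
          * ENNReal.ofReal (4 * rc * M * |t₁ - t₂| ^ ((1 : ℝ) / 2)) ^ (1 / p) := by
        rw [Real.enorm_eq_ofReal hF₀.le]
        gcongr
    _ = _ := by
      rw [ENNReal.ofReal_rpow_of_nonneg (by positivity) (by positivity), hexp,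
        ← ENNReal.ofReal_mul hF₀.le, ← mul_assoc]

theorem stmt_3 (Ω : Set (EuclideanSpace ℝ (Fin 2))) (hΩ : MeasurableSet Ω)
    (rc F₀ T M : ℝ) (hrc : 0 < rc) (hF₀ : 0 < F₀) (hT : 0 < T) (hM : 0 ≤ M)
    (z : ℝ → EuclideanSpace ℝ (Fin 2))
    (hz : ∀ t₁ ∈ Set.Icc (0 : ℝ) T, ∀ t₂ ∈ Set.Icc (0 : ℝ) T,
      dist (z t₁) (z t₂) ≤ M * |t₁ - t₂| ^ ((1 : ℝ) / 2))
    (g : ℝ → EuclideanSpace ℝ (Fin 2) → ℝ)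
    (hg : ∀ t x, g t x = F₀ * (Metric.ball (0 : EuclideanSpace ℝ (Fin 2)) rc).indicator
      (fun _ => (1 : ℝ)) (x - z t))
    (p : ℝ) (hp : 1 ≤ p) :
    ∀ t₁ ∈ Set.Icc (0 : ℝ) T, ∀ t₂ ∈ Set.Icc (0 : ℝ) T,
      eLpNorm (fun x => g t₁ x - g t₂ x) (ENNReal.ofReal p) (volume.restrict Ω)
        ≤ ENNReal.ofReal (F₀ * (4 * rc * M) ^ (1 / p) * |t₁ - t₂| ^ (1 / (2 * p))) :=
  stmt_3_general Ω rc F₀ T M hrc hF₀ hM z hz g hg p hp
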